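/- Let (P, C, ψ, e, ψ^C) be entwining data and Φ : C → P convolution invertible with Φ(e) = 1 and ψ∘(id_C ⊗ Φ) = (Φ ⊗ id_C)∘ψ^C. Then the convolution inverse Φ⁻¹ satisfies Φ⁻¹(c) ⊗ e = Φ⁻¹(c₍₂₎)_α ⊗ c₍₁₎^α for all c ∈ C, where ψ(c₍₁₎ ⊗ Φ⁻¹(c₍₂₎)) = Φ⁻¹(c₍₂₎)_α ⊗ c₍₁₎^α. -/
import Mathlib


open TensorProduct LinearMap

noncomputable section

namespace Entwine

variable (k : Type) [Field k] (P : Type) [Ring P] [Algebra k P]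
  (C : Type) [AddCommGroup C] [Module k C] [Coalgebra k C]

/-- coproduct of `C` -/
abbrev Δ : C →ₗ[k] C ⊗[k] C := Coalgebra.comul
/-- counit of `C` -/
abbrev ε : C →ₗ[k] k := Coalgebra.counit
/-- multiplication of `P` -/
abbrev μ : P ⊗[k] P →ₗ[k] P := LinearMap.mul' k P

variable (ψ : C ⊗[k] P →ₗ[k] P ⊗[k] C)

/-- entwining axiom `ψ∘(id⊗μ) = (μ⊗id)∘ψ₂₃∘ψ₁₂` -/
def AxMul : Prop :=
  ψ ∘ₗ map LinearMap.id (μ k P) =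
    map (μ k P) LinearMap.id
      ∘ₗ (TensorProduct.assoc k P P C).symm.toLinearMap
      ∘ₗ map LinearMap.id ψ
      ∘ₗ (TensorProduct.assoc k P C P).toLinearMap
      ∘ₗ map ψ LinearMap.id
      ∘ₗ (TensorProduct.assoc k C P P).symm.toLinearMap

/-- entwining axiom `ψ(c ⊗ 1) = 1 ⊗ c` -/
def AxOne : Prop := ∀ c : C, ψ (c ⊗ₜ (1 : P)) = (1 : P) ⊗ₜ c

/-- entwining axiom `(id⊗Δ)∘ψ = ψ₁₂∘ψ₂₃∘(Δ⊗id)` -/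
def AxComul : Prop :=
  map LinearMap.id (Δ k C) ∘ₗ ψ =
    (TensorProduct.assoc k P C C).toLinearMap
      ∘ₗ map ψ LinearMap.id
      ∘ₗ (TensorProduct.assoc k C P C).symm.toLinearMap
      ∘ₗ map LinearMap.id ψ
      ∘ₗ (TensorProduct.assoc k C C P).toLinearMap
      ∘ₗ map (Δ k C) LinearMap.id

/-- entwining axiom `(id⊗ε)∘ψ = ε⊗id` -/
def AxCounit : Prop :=
  (TensorProduct.rid k P).toLinearMap ∘ₗ map LinearMap.id (ε k C) ∘ₗ ψ =
    (TensorProduct.lid k P).toLinearMap ∘ₗ map (ε k C) LinearMap.id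

/-- `ψ` is an entwining map for the algebra `P` and the coalgebra `C` -/
def IsEntwining : Prop :=
  AxMul k P C ψ ∧ AxOne k P C ψ ∧ AxComul k P C ψ ∧ AxCounit k P C ψ

variable (e : C)

/-- `e` is a group-like element -/
def IsGrouplike : Prop :=
  Δ k C e = e ⊗ₜ[k] e ∧ ε k C e = 1

variable (ψC : C ⊗[k] C →ₗ[k] C ⊗[k] C)

/-- `(id⊗Δ)∘ψ^C = ψ^C₁₂∘ψ^C₂₃∘(Δ⊗id)` -/
def AxPsiCComul : Prop :=
  map LinearMap.id (Δ k C) ∘ₗ ψC =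
    (TensorProduct.assoc k C C C).toLinearMap
      ∘ₗ map ψC LinearMap.id
      ∘ₗ (TensorProduct.assoc k C C C).symm.toLinearMap
      ∘ₗ map LinearMap.id ψC
      ∘ₗ (TensorProduct.assoc k C C C).toLinearMap
      ∘ₗ map (Δ k C) LinearMap.id

/-- `(id⊗ε)∘ψ^C = ε⊗id` -/
def AxPsiCCounit : Prop :=
  (TensorProduct.rid k C).toLinearMap ∘ₗ map LinearMap.id (ε k C) ∘ₗ ψC =
    (TensorProduct.lid k C).toLinearMap ∘ₗ map (ε k C) LinearMap.id

/-- `ψ^C(e ⊗ c) = Δc` -/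
def AxPsiCUnit : Prop := ∀ c : C, ψC (e ⊗ₜ[k] c) = Δ k C c

/-- `(P, C, ψ, e, ψ^C)` form entwining data -/
def IsEntwiningData : Prop :=
  IsEntwining k P C ψ ∧ IsGrouplike k C e ∧
    AxPsiCComul k C ψC ∧ AxPsiCCounit k C ψC ∧ AxPsiCUnit k C e ψC

/-- the right coaction `Δ_R u = ψ(e ⊗ u)` on `P` -/
def deltaR : P →ₗ[k] P ⊗[k] C := ψ ∘ₗ TensorProduct.mk k C P e

/-- the fixed point subspace `M = P^{coC}_e`, as a submodule of `P` -/
def Msub : Submodule k P where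
  carrier := {x : P | ψ (e ⊗ₜ x) = x ⊗ₜ e}
  add_mem' := by
    intro a b ha hb
    simp only [Set.mem_setOf_eq] at *
    rw [TensorProduct.tmul_add, map_add, ha, hb, TensorProduct.add_tmul]
  zero_mem' := by
    simp only [Set.mem_setOf_eq, TensorProduct.tmul_zero, map_zero,
      TensorProduct.zero_tmul]
  smul_mem' := by
    intro r x hx
    simp only [Set.mem_setOf_eq] at *
    rw [TensorProduct.tmul_smul, map_smul, hx, TensorProduct.smul_tmul']

/-- the subspace `M ⊗ C` of `P ⊗ C` -/
def MCsub : Submodule k (P ⊗[k] C) :=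
  LinearMap.range (map (Msub k P C ψ e).subtype (LinearMap.id : C →ₗ[k] C))

variable (ρ : C ⊗[k] P →ₗ[k] P) (σ : C ⊗[k] C →ₗ[k] P)

/-- the map `ρ̂ : c ⊗ x ↦ ρ(c₍₁₎ ⊗ x_α) ⊗ c₍₂₎^α` -/
def rhat : C ⊗[k] P →ₗ[k] P ⊗[k] C :=
  map ρ LinearMap.id
    ∘ₗ (TensorProduct.assoc k C P C).symm.toLinearMap
    ∘ₗ map LinearMap.id ψ
    ∘ₗ (TensorProduct.assoc k C C P).toLinearMap
    ∘ₗ map (Δ k C) LinearMap.id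

/-- the map `σ̂ : b ⊗ c ↦ σ(b₍₁₎ ⊗ c_A) ⊗ b₍₂₎^A` -/
def shat : C ⊗[k] C →ₗ[k] P ⊗[k] C :=
  map σ LinearMap.id
    ∘ₗ (TensorProduct.assoc k C C C).symm.toLinearMap
    ∘ₗ map LinearMap.id ψC
    ∘ₗ (TensorProduct.assoc k C C C).toLinearMap
    ∘ₗ map (Δ k C) LinearMap.id

/-- multiplication of the first two factors: `x ⊗ (y ⊗ c) ↦ xy ⊗ c` -/
def mulPC : P ⊗[k] (P ⊗[k] C) →ₗ[k] P ⊗[k] C :=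
  map (μ k P) LinearMap.id ∘ₗ (TensorProduct.assoc k P P C).symm.toLinearMap

/-- the crossed product `(x ⊗ b)(y ⊗ c) = xρ(b₍₁₎⊗y_α)σ(b₍₂₎^α₍₁₎⊗c_A) ⊗ b₍₂₎^α₍₂₎^A` -/
def prodX : (P ⊗[k] C) ⊗[k] (P ⊗[k] C) →ₗ[k] P ⊗[k] C :=
  mulPC k P C
    ∘ₗ map LinearMap.id (mulPC k P C)
    ∘ₗ map LinearMap.id
        (map LinearMap.id (shat k P C ψC σ)
          ∘ₗ (TensorProduct.assoc k P C C).toLinearMap)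
    ∘ₗ map LinearMap.id
        (map (rhat k P C ψ ρ) LinearMap.id
          ∘ₗ (TensorProduct.assoc k C P C).symm.toLinearMap)
    ∘ₗ (TensorProduct.assoc k P C (P ⊗[k] C)).toLinearMap

/-- condition (i): `ρ(e,x) = x` for `x ∈ M` and `ρ(c,1) = ε(c)1` -/
def CondI : Prop :=
  (∀ x : P, x ∈ Msub k P C ψ e → ρ (e ⊗ₜ x) = x) ∧
    ∀ c : C, ρ (c ⊗ₜ (1 : P)) = ε k C c • (1 : P)

/-- condition (ii): `ρ̂` maps `C ⊗ M` into `M ⊗ C` -/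
def CondII : Prop :=
  ∀ (c : C) (x : P), x ∈ Msub k P C ψ e →
    rhat k P C ψ ρ (c ⊗ₜ x) ∈ MCsub k P C ψ e

/-- the right hand side of condition (iii): `(μ⊗id)∘(id⊗ρ̂)∘(ρ̂⊗id)` -/
def BmapIII : C ⊗[k] (P ⊗[k] P) →ₗ[k] P ⊗[k] C :=
  mulPC k P C
    ∘ₗ map LinearMap.id (rhat k P C ψ ρ)
    ∘ₗ (TensorProduct.assoc k P C P).toLinearMap
    ∘ₗ map (rhat k P C ψ ρ) LinearMap.id
    ∘ₗ (TensorProduct.assoc k C P P).symm.toLinearMap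

/-- condition (iii): twisted multiplicativity of `ρ` -/
def CondIII : Prop :=
  ∀ (c : C) (x y : P), x ∈ Msub k P C ψ e → y ∈ Msub k P C ψ e →
    rhat k P C ψ ρ (c ⊗ₜ (x * y)) = BmapIII k P C ψ ρ (c ⊗ₜ (x ⊗ₜ y))

/-- `σ` takes values in `M` -/
def SigmaIntoM : Prop := ∀ b c : C, σ (b ⊗ₜ c) ∈ Msub k P C ψ e

/-- condition (iv): `σ(e⊗c) = ε(c)1` and `σ(c₍₁₎⊗e_A) ⊗ c₍₂₎^A = 1 ⊗ c` -/
def CondIV : Prop :=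
  (∀ c : C, σ (e ⊗ₜ c) = ε k C c • (1 : P)) ∧
    ∀ c : C, shat k P C ψC σ (c ⊗ₜ e) = (1 : P) ⊗ₜ c

/-- `(ρ, σ)` are crossed product data: conditions (i)–(iv). -/
def IsCrossedData : Prop :=
  CondI k P C ψ e ρ ∧ CondII k P C ψ e ρ ∧ CondIII k P C ψ e ρ ∧
    SigmaIntoM k P C ψ e σ ∧ CondIV k P C e ψC σ

/-- left hand side of the cocycle condition (2.6) -/
def CocLHS : C ⊗[k] (C ⊗[k] C) →ₗ[k] P ⊗[k] C :=
  mulPC k P C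
    ∘ₗ map LinearMap.id (shat k P C ψC σ)
    ∘ₗ (TensorProduct.assoc k P C C).toLinearMap
    ∘ₗ map (rhat k P C ψ ρ) LinearMap.id
    ∘ₗ (TensorProduct.assoc k C P C).symm.toLinearMap
    ∘ₗ map LinearMap.id (shat k P C ψC σ)

/-- right hand side of the cocycle condition (2.6) -/
def CocRHS : C ⊗[k] (C ⊗[k] C) →ₗ[k] P ⊗[k] C :=
  mulPC k P C
    ∘ₗ map LinearMap.id (shat k P C ψC σ)
    ∘ₗ (TensorProduct.assoc k P C C).toLinearMap
    ∘ₗ map (shat k P C ψC σ) LinearMap.id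
    ∘ₗ (TensorProduct.assoc k C C C).symm.toLinearMap

/-- the cocycle condition (2.6) -/
def Cocycle : Prop := CocLHS k P C ψ ψC ρ σ = CocRHS k P C ψC σ

/-- left hand side of the twisted module condition (2.7) -/
def TwLHS : C ⊗[k] (C ⊗[k] P) →ₗ[k] P ⊗[k] C :=
  mulPC k P C
    ∘ₗ map LinearMap.id (shat k P C ψC σ)
    ∘ₗ (TensorProduct.assoc k P C C).toLinearMap
    ∘ₗ map (rhat k P C ψ ρ) LinearMap.id
    ∘ₗ (TensorProduct.assoc k C P C).symm.toLinearMap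
    ∘ₗ map LinearMap.id (rhat k P C ψ ρ)

/-- right hand side of the twisted module condition (2.7) -/
def TwRHS : C ⊗[k] (C ⊗[k] P) →ₗ[k] P ⊗[k] C :=
  mulPC k P C
    ∘ₗ map LinearMap.id (rhat k P C ψ ρ)
    ∘ₗ (TensorProduct.assoc k P C P).toLinearMap
    ∘ₗ map (shat k P C ψC σ) LinearMap.id
    ∘ₗ (TensorProduct.assoc k C C P).symm.toLinearMap

/-- the twisted module condition (2.7), for `x ∈ M` -/
def Twisted : Prop :=
  ∀ (a b : C) (x : P), x ∈ Msub k P C ψ e →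
    TwLHS k P C ψ ψC ρ σ (a ⊗ₜ (b ⊗ₜ x)) = TwRHS k P C ψ ψC ρ σ (a ⊗ₜ (b ⊗ₜ x))

end Entwine

namespace Entwine

section Cleft
variable (k : Type) [Field k] (P : Type) [Ring P] [Algebra k P]
    (C : Type) [AddCommGroup C] [Module k C] [Coalgebra k C]
    (ψ : C ⊗[k] P →ₗ[k] P ⊗[k] C) (e : C) (ψC : C ⊗[k] C →ₗ[k] C ⊗[k] C)
    (Φ Φi : C →ₗ[k] P)

/-- `Φi` is a convolution inverse of `Φ` in `Hom(C, P)` -/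
def ConvInv : Prop :=
  (μ k P ∘ₗ map Φ Φi ∘ₗ Δ k C = Algebra.linearMap k P ∘ₗ ε k C) ∧
    (μ k P ∘ₗ map Φi Φ ∘ₗ Δ k C = Algebra.linearMap k P ∘ₗ ε k C)

/-- the covariance condition `ψ∘(id⊗Φ) = (Φ⊗id)∘ψ^C` -/
def CovPhi : Prop :=
  ψ ∘ₗ map LinearMap.id Φ = map Φ LinearMap.id ∘ₗ ψC

/-- `ρ(c ⊗ u) = Φ(c₍₁₎) u_α Φ⁻¹(c₍₂₎^α)` -/
def rhoPhi : C ⊗[k] P →ₗ[k] P :=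
  μ k P
    ∘ₗ map LinearMap.id (μ k P)
    ∘ₗ map Φ (map LinearMap.id Φi)
    ∘ₗ map LinearMap.id ψ
    ∘ₗ (TensorProduct.assoc k C C P).toLinearMap
    ∘ₗ map (Δ k C) LinearMap.id

/-- `σ(b ⊗ c) = Φ(b₍₁₎) Φ(c_A) Φ⁻¹(b₍₂₎^A)` -/
def sigmaPhi : C ⊗[k] C →ₗ[k] P :=
  μ k P
    ∘ₗ map LinearMap.id (μ k P)
    ∘ₗ map Φ (map Φ Φi)
    ∘ₗ map LinearMap.id ψC
    ∘ₗ (TensorProduct.assoc k C C C).toLinearMap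
    ∘ₗ map (Δ k C) LinearMap.id

/-- `Θ : x ⊗ c ↦ x Φ(c)` -/
def Theta : P ⊗[k] C →ₗ[k] P := μ k P ∘ₗ map LinearMap.id Φ

/-- `Θ⁻¹ : u ↦ u_α Φ⁻¹(e^α₍₁₎) ⊗ e^α₍₂₎` -/
def ThetaInv : P →ₗ[k] P ⊗[k] C :=
  mulPC k P C
    ∘ₗ map LinearMap.id (map Φi LinearMap.id)
    ∘ₗ map LinearMap.id (Δ k C)
    ∘ₗ deltaR k P C ψ e

end Cleft

end Entwine

namespace Entwine

section Aux
variable (k : Type) [Field k] (P : Type) [Ring P] [Algebra k P]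
    (C : Type) [AddCommGroup C] [Module k C] [Coalgebra k C]

lemma mulPC_tmul3 (x y : P) (c : C) :
    mulPC k P C (x ⊗ₜ[k] (y ⊗ₜ[k] c)) = (x * y) ⊗ₜ[k] c := by
  simp [mulPC, LinearMap.mul'_apply]

lemma mulPC_tmul_one (z : P ⊗[k] C) : mulPC k P C ((1 : P) ⊗ₜ[k] z) = z := by
  induction z using TensorProduct.induction_on with
  | zero => simp
  | tmul y c => simp [mulPC_tmul3]
  | add a b ha hb => rw [TensorProduct.tmul_add, map_add, ha, hb]

lemma mulPC_mulPC (x y : P) (z : P ⊗[k] C) :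
    mulPC k P C (x ⊗ₜ[k] mulPC k P C (y ⊗ₜ[k] z)) =
      mulPC k P C ((x * y) ⊗ₜ[k] z) := by
  induction z using TensorProduct.induction_on with
  | zero => simp
  | tmul p c => simp [mulPC_tmul3, mul_assoc]
  | add a b ha hb =>
      rw [TensorProduct.tmul_add, map_add, TensorProduct.tmul_add, map_add, ha, hb,
        TensorProduct.tmul_add, map_add]

end Aux

/-- For a convolution invertible `Φ` intertwining `ψ` and `ψ^C`,
the convolution inverse satisfies `Φ⁻¹(c) ⊗ e = Φ⁻¹(c₍₂₎)_α ⊗ c₍₁₎^α`, i.e.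
`Φ⁻¹(c) ⊗ e = ψ(c₍₁₎ ⊗ Φ⁻¹(c₍₂₎))`. -/
theorem phiInv_covariance
    (k : Type) [Field k] (P : Type) [Ring P] [Algebra k P]
    (C : Type) [AddCommGroup C] [Module k C] [Coalgebra k C]
    (ψ : C ⊗[k] P →ₗ[k] P ⊗[k] C) (e : C) (ψC : C ⊗[k] C →ₗ[k] C ⊗[k] C)
    (Φ Φi : C →ₗ[k] P)
    (hdata : IsEntwiningData k P C ψ e ψC)
    (hconv : ConvInv k P C Φ Φi)
    (hΦe : Φ e = 1)
    (hcov : CovPhi k P C ψ ψC Φ) :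
    ∀ c : C, Φi c ⊗ₜ[k] e = (ψ ∘ₗ map LinearMap.id Φi ∘ₗ Δ k C) c := by
  unfold IsEntwiningData IsEntwining IsGrouplike AxMul AxOne AxComul AxCounit
    AxPsiCComul AxPsiCCounit AxPsiCUnit at hdata
  unfold ConvInv at hconv
  unfold CovPhi at hcov
  obtain ⟨⟨hmul, hone, hcomul, hcounit⟩, ⟨hge, hgee⟩, hC1, hC2, hCe⟩ := hdata
  obtain ⟨hconv1, hconv2⟩ := hconv
  set G : C →ₗ[k] P ⊗[k] C := ψ ∘ₗ map LinearMap.id Φi ∘ₗ Δ k C with hGdef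
  -- conversions between rTensor/lTensor and map
  have hrT : (Δ k C).rTensor C = map (Δ k C) LinearMap.id := rfl
  have hlT : (Δ k C).lTensor C = map LinearMap.id (Δ k C) := rfl
  have hrTc : (ε k C).rTensor C = map (ε k C) LinearMap.id := rfl
  have hlTc : (ε k C).lTensor C = map LinearMap.id (ε k C) := rfl
  -- covariance at the grouplike element
  have hcovE : ∀ b : C, ψ (e ⊗ₜ[k] Φ b) = map Φ LinearMap.id (Δ k C b) := by
    intro b
    have h := LinearMap.congr_fun hcov (e ⊗ₜ[k] b)
    simp only [LinearMap.comp_apply, map_tmul, LinearMap.id_coe, id_eq] at h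
    rw [h, hCe b]
  set Q : C ⊗[k] (C ⊗[k] C) →ₗ[k] P ⊗[k] C :=
    mulPC k P C ∘ₗ map Φ (ψ ∘ₗ map LinearMap.id Φi) with hQ
  set N : (C ⊗[k] C) ⊗[k] C →ₗ[k] P ⊗[k] C :=
    Q ∘ₗ (TensorProduct.assoc k C C C).toLinearMap with hN
  -- Step A : ψ(e ⊗ Φ(b)Φi(d)) = N(Δb ⊗ d)
  have stepA : ψ ∘ₗ TensorProduct.mk k C P e ∘ₗ μ k P ∘ₗ map Φ Φi
      = N ∘ₗ map (Δ k C) LinearMap.id := by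
    apply TensorProduct.ext'
    intro b d
    have h1 := LinearMap.congr_fun hmul (e ⊗ₜ[k] (Φ b ⊗ₜ[k] Φi d))
    simp only [LinearMap.comp_apply, map_tmul, LinearMap.id_coe, id_eq,
      LinearEquiv.coe_coe, TensorProduct.assoc_symm_tmul, TensorProduct.assoc_tmul,
      LinearMap.mul'_apply, TensorProduct.mk_apply] at h1 ⊢
    rw [hcovE b] at h1
    rw [h1]
    generalize (Δ k C b) = w
    induction w using TensorProduct.induction_on with
    | zero => simp [hN, hQ]
    | tmul a b' =>
        simp [hN, hQ, mulPC, LinearMap.comp_apply, TensorProduct.assoc_tmul]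
    | add x y hx hy =>
        simp only [map_add, TensorProduct.add_tmul, hx, hy]
  -- key1 : pushing G inside
  have key1 : ∀ w : C ⊗[k] C,
      mulPC k P C (map Φ G w) = Q (map LinearMap.id (Δ k C) w) := by
    intro w
    induction w using TensorProduct.induction_on with
    | zero => simp
    | tmul b d => simp [hQ, hGdef, LinearMap.comp_apply]
    | add x y hx hy => simp only [map_add, hx, hy]
  -- H1 : Φ ⋆ G = ε(·) • (1 ⊗ e)
  have H1 : ∀ c : C, mulPC k P C (map Φ G (Δ k C c)) = ε k C c • ((1:P) ⊗ₜ[k] e) := by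
    intro c
    rw [key1]
    have hco := Coalgebra.coassoc_apply (R := k) (A := C) c
    rw [hrT, hlT] at hco
    rw [← hco]
    have hA := LinearMap.congr_fun stepA (Δ k C c)
    simp only [LinearMap.comp_apply] at hA
    have : Q ((TensorProduct.assoc k C C C) (map (Δ k C) LinearMap.id (Δ k C c)))
        = N (map (Δ k C) LinearMap.id (Δ k C c)) := rfl
    rw [this, ← hA]
    have h2 := LinearMap.congr_fun hconv1 c
    simp only [LinearMap.comp_apply] at h2
    rw [h2]
    have : Algebra.linearMap k P (ε k C c) = ε k C c • (1 : P) := by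
      simp [Algebra.linearMap_apply, Algebra.algebraMap_eq_smul_one]
    rw [this]
    simp only [TensorProduct.mk_apply, TensorProduct.tmul_smul, map_smul, hone e]
  have H1' : mulPC k P C ∘ₗ map Φ G ∘ₗ Δ k C
      = (ε k C).smulRight ((1:P) ⊗ₜ[k] e) :=
    LinearMap.ext fun c => by
      simpa only [LinearMap.comp_apply, LinearMap.smulRight_apply] using H1 c
  -- key4 : Φi ⋆ (ε(·) • (1 ⊗ e)) = Φi(·) ⊗ e
  have key4 : ∀ w : C ⊗[k] C,
      mulPC k P C (map Φi ((ε k C).smulRight ((1:P) ⊗ₜ[k] e)) w)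
        = Φi ((TensorProduct.rid k C) (map LinearMap.id (ε k C) w)) ⊗ₜ[k] e := by
    intro w
    induction w using TensorProduct.induction_on with
    | zero => simp
    | tmul b d =>
        simp [mulPC_tmul3, TensorProduct.tmul_smul, TensorProduct.smul_tmul',
          TensorProduct.rid_tmul]
    | add x y hx hy =>
        simp only [map_add, hx, hy, TensorProduct.add_tmul]
  -- key2 : pushing (Φ ⋆ G) inside Φi ⋆ ·
  set Q2 : C ⊗[k] (C ⊗[k] C) →ₗ[k] P ⊗[k] C :=
    mulPC k P C ∘ₗ map Φi (mulPC k P C ∘ₗ map Φ G) with hQ2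
  have key2 : ∀ w : C ⊗[k] C,
      mulPC k P C (map Φi (mulPC k P C ∘ₗ map Φ G ∘ₗ Δ k C) w)
        = Q2 (map LinearMap.id (Δ k C) w) := by
    intro w
    induction w using TensorProduct.induction_on with
    | zero => simp
    | tmul b d => simp [hQ2, LinearMap.comp_apply]
    | add x y hx hy => simp only [map_add, hx, hy]
  -- key3 : associativity step
  have key3 : Q2 ∘ₗ (TensorProduct.assoc k C C C).toLinearMap
      = mulPC k P C ∘ₗ map (μ k P ∘ₗ map Φi Φ) G := by
    apply TensorProduct.ext_threefold
    intro a b d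
    simp only [hQ2, LinearMap.comp_apply, LinearEquiv.coe_coe,
      TensorProduct.assoc_tmul, map_tmul, LinearMap.id_coe, id_eq,
      LinearMap.mul'_apply]
    rw [mulPC_mulPC]
  -- final chain
  intro c
  show Φi c ⊗ₜ[k] e = G c
  have hstart : Φi c ⊗ₜ[k] e
      = mulPC k P C (map Φi ((ε k C).smulRight ((1:P) ⊗ₜ[k] e)) (Δ k C c)) := by
    rw [key4]
    have hl := Coalgebra.lTensor_counit_comul (R := k) (A := C) c
    rw [hlTc] at hl
    rw [hl]
    simp [TensorProduct.rid_tmul]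
  rw [hstart, ← H1', key2]
  have hco := Coalgebra.coassoc_apply (R := k) (A := C) c
  rw [hrT, hlT] at hco
  rw [← hco]
  have h3 : Q2 ((TensorProduct.assoc k C C C) (map (Δ k C) LinearMap.id (Δ k C c)))
      = (mulPC k P C ∘ₗ map (μ k P ∘ₗ map Φi Φ) G)
          (map (Δ k C) LinearMap.id (Δ k C c)) := by
    rw [← key3]; rfl
  rw [h3]
  have h4 : map (μ k P ∘ₗ map Φi Φ) G (map (Δ k C) LinearMap.id (Δ k C c))
      = map (Algebra.linearMap k P ∘ₗ ε k C) G (Δ k C c) := by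
    have : map (μ k P ∘ₗ map Φi Φ) G ∘ₗ map (Δ k C) LinearMap.id
        = map ((μ k P ∘ₗ map Φi Φ) ∘ₗ Δ k C) (G ∘ₗ LinearMap.id) :=
      (TensorProduct.map_comp _ _ _ _).symm
    rw [LinearMap.comp_id, LinearMap.comp_assoc, hconv2] at this
    exact LinearMap.congr_fun this (Δ k C c)
  rw [LinearMap.comp_apply, h4]
  have h5 : map (Algebra.linearMap k P ∘ₗ ε k C) G (Δ k C c)
      = map (Algebra.linearMap k P) G (map (ε k C) LinearMap.id (Δ k C c)) := by
    have : map (Algebra.linearMap k P ∘ₗ ε k C) (G ∘ₗ LinearMap.id)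
        = map (Algebra.linearMap k P) G ∘ₗ map (ε k C) LinearMap.id :=
      TensorProduct.map_comp _ _ _ _
    rw [LinearMap.comp_id] at this
    rw [this]; rfl
  rw [h5]
  have hr := Coalgebra.rTensor_counit_comul (R := k) (A := C) c
  rw [hrTc] at hr
  rw [hr]
  simp only [map_tmul, map_one, Algebra.linearMap_apply]
  rw [mulPC_tmul_one]

end Entwine
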